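/- Let (E, 𝔉, ν) be a measure space, let r : E → ℝ be a measurable nonnegative function with ∫ r dν = 1, and let c ∈ ℝ with 0 < c ≤ 1. Let q : E → ℝ be measurable nonnegative with ∫ q dν = 1, q = 0 ν-a.e. on {x : r x = 0}, and with x ↦ q x * log (q x) and x ↦ q x * log (r x) ν-integrable. Define the free energy F(q) := ∫ q (log q − log (c · r)) dν and the variational free energy F̃(q) := ∫ q (log q − log r) dν. Then (i) F(q) = F̃(q) − log c; (ii) F̃(q) ≥ 0 with equality if and only if q = r ν-almost everywhere; and therefore (iii) F(q) ≥ −log c ≥ 0, so the free energy bounds the surprisal −log c from above, with equality F(q) = −log c exactly when q = r ν-a.e. -/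

import Mathlib

open MeasureTheory Real

/-- With the joint density modelled as `c · r` (so `-log c` is the surprisal):
(i) the free energy `F(q) = ∫ q (log q - log (c·r))` equals the variational free
energy `F̃(q) = ∫ q (log q - log r)` minus `log c`; (ii) `F̃(q) ≥ 0` with equality
iff `q = r` a.e.; (iii) hence `F(q) ≥ -log c ≥ 0`, i.e. the free energy bounds the
surprisal from above, with equality exactly when `q = r` a.e. -/
theorem free_energy_bounds_surprisal
    {E : Type*} [MeasurableSpace E] (ν : Measure E)
    (r : E → ℝ) (hr : Measurable r) (hr0 : ∀ x, 0 ≤ r x)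
    (hri : ∫ x, r x ∂ν = 1)
    (c : ℝ) (hc0 : 0 < c) (hc1 : c ≤ 1)
    (q : E → ℝ) (hq : Measurable q) (hq0 : ∀ x, 0 ≤ q x)
    (hqi : ∫ x, q x ∂ν = 1)
    (habs : ∀ᵐ x ∂ν, r x = 0 → q x = 0)
    (hqlq : Integrable (fun x => q x * Real.log (q x)) ν)
    (hqlr : Integrable (fun x => q x * Real.log (r x)) ν) :
    (∫ x, q x * (Real.log (q x) - Real.log (c * r x)) ∂ν =
        (∫ x, q x * (Real.log (q x) - Real.log (r x)) ∂ν) - Real.log c) ∧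
    (0 ≤ ∫ x, q x * (Real.log (q x) - Real.log (r x)) ∂ν) ∧
    ((∫ x, q x * (Real.log (q x) - Real.log (r x)) ∂ν = 0) ↔ q =ᵐ[ν] r) ∧
    (-Real.log c ≤ ∫ x, q x * (Real.log (q x) - Real.log (c * r x)) ∂ν) ∧
    (0 ≤ -Real.log c) ∧
    ((∫ x, q x * (Real.log (q x) - Real.log (c * r x)) ∂ν = -Real.log c) ↔
      q =ᵐ[ν] r) := by
  have hqInt : Integrable q ν := by
    by_contra h; rw [integral_undef h] at hqi; norm_num at hqi
  have hrInt : Integrable r ν := by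
    by_contra h; rw [integral_undef h] at hri; norm_num at hri
  have hKL : Integrable (fun x => q x * (Real.log (q x) - Real.log (r x))) ν := by
    have := hqlq.sub hqlr
    simpa [mul_sub, Pi.sub_def] using this
  set K := ∫ x, q x * (Real.log (q x) - Real.log (r x)) ∂ν with hKdef
  -- pointwise key: f x := q(log q - log r) - (q - r) ≥ 0 when (r=0 → q=0)
  have hsub : Integrable (fun x => q x - r x) ν := hqInt.sub hrInt
  have hfInt : Integrable
      (fun x => q x * (Real.log (q x) - Real.log (r x)) - (q x - r x)) ν :=
    hKL.sub hsub
  have key : ∀ x, (r x = 0 → q x = 0) →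
      0 ≤ q x * (Real.log (q x) - Real.log (r x)) - (q x - r x) := by
    intro x hx
    rcases eq_or_lt_of_le (hq0 x) with hq' | hq'
    · have : q x = 0 := hq'.symm
      simp [this, hr0 x]
    · rcases eq_or_lt_of_le (hr0 x) with hr' | hr'
      · exact absurd (hx hr'.symm) hq'.ne'
      · have ht : 0 < r x / q x := div_pos hr' hq'
        have hlog : Real.log (r x / q x) ≤ r x / q x - 1 :=
          Real.log_le_sub_one_of_pos ht
        have : q x * (r x / q x - 1 - Real.log (r x / q x)) ≤
            q x * (Real.log (q x) - Real.log (r x)) - (q x - r x) := by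
          rw [Real.log_div hr'.ne' hq'.ne']
          field_simp
          ring_nf
          nlinarith [hq'.le]
        nlinarith [mul_nonneg hq'.le (sub_nonneg.2 hlog)]
  have hf0 : ∀ᵐ x ∂ν,
      0 ≤ q x * (Real.log (q x) - Real.log (r x)) - (q x - r x) := by
    filter_upwards [habs] with x hx using key x hx
  have hfint_eq : ∫ x, (q x * (Real.log (q x) - Real.log (r x)) - (q x - r x)) ∂ν
      = K := by
    rw [integral_sub hKL hsub, integral_sub hqInt hrInt, hqi, hri]
    simp [hKdef]
  -- (ii) nonnegativity
  have hKnn : 0 ≤ K := by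
    rw [← hfint_eq]
    exact integral_nonneg_of_ae hf0
  -- equality iff
  have hiff : K = 0 ↔ q =ᵐ[ν] r := by
    constructor
    · intro hK0
      have hz : (fun x => q x * (Real.log (q x) - Real.log (r x)) - (q x - r x))
          =ᵐ[ν] 0 := by
        rw [← (integral_eq_zero_iff_of_nonneg_ae hf0 hfInt)]
        rw [hfint_eq, hK0]
      filter_upwards [hz, habs] with x hx hx2
      simp only [Pi.zero_apply] at hx
      rcases eq_or_lt_of_le (hq0 x) with hq' | hq'
      · have hq0x : q x = 0 := hq'.symm
        have : r x = 0 := by simpa [hq0x] using hx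
        rw [hq0x, this]
      · rcases eq_or_lt_of_le (hr0 x) with hr' | hr'
        · exact absurd (hx2 hr'.symm) hq'.ne'
        · by_contra hne
          have ht : 0 < r x / q x := div_pos hr' hq'
          have ht1 : r x / q x ≠ 1 := by
            intro h1
            exact hne (by field_simp at h1; linarith)
          have hlog : Real.log (r x / q x) < r x / q x - 1 :=
            Real.log_lt_sub_one_of_pos ht ht1
          have hpos : 0 < q x * (r x / q x - 1 - Real.log (r x / q x)) :=
            mul_pos hq' (by linarith)
          have heq : q x * (r x / q x - 1 - Real.log (r x / q x)) =
              q x * (Real.log (q x) - Real.log (r x)) - (q x - r x) := by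
            rw [Real.log_div hr'.ne' hq'.ne']
            field_simp
            ring
          rw [heq, hx] at hpos
          exact lt_irrefl 0 hpos
    · intro hqr
      have : (fun x => q x * (Real.log (q x) - Real.log (r x))) =ᵐ[ν] 0 := by
        filter_upwards [hqr] with x hx
        simp [hx]
      rw [hKdef, integral_congr_ae this]
      simp
  -- (i)
  have hcongr : (fun x => q x * (Real.log (q x) - Real.log (c * r x))) =ᵐ[ν]
      (fun x => q x * (Real.log (q x) - Real.log (r x)) - Real.log c * q x) := by
    filter_upwards [habs] with x hx
    rcases eq_or_lt_of_le (hr0 x) with hr' | hr'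
    · have : q x = 0 := hx hr'.symm
      simp [this]
    · rw [Real.log_mul hc0.ne' hr'.ne']; ring
  have hi : ∫ x, q x * (Real.log (q x) - Real.log (c * r x)) ∂ν = K - Real.log c := by
    rw [integral_congr_ae hcongr, integral_sub hKL (hqInt.const_mul _),
      integral_const_mul, hqi]
    simp [hKdef]
  have hlc : Real.log c ≤ 0 := Real.log_nonpos hc0.le hc1
  refine ⟨hi, hKnn, hiff, ?_, by linarith, ?_⟩
  · rw [hi]; linarith
  · rw [hi, ← hiff]
    constructor
    · intro h; linarith
    · intro h; rw [h]; ring
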